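/- Let h ∈ L¹_loc,poly(ℝ₊ˣ) and f ∈ 𝐒(ℝ₊ˣ) with f ∗ h = 0 identically. Then for every s ∈ ℂ, M(f ∗ h⁺)(s) = −M(f ∗ h⁻)(s). -/
import Mathlib


open MeasureTheory Set Filter Asymptotics

/-- The Mellin transform `M(g)(s) = ∫₀^∞ g(x) x^s dx/x`. -/
noncomputable def mellinT (g : ℝ → ℂ) (s : ℂ) : ℂ :=
  ∫ x in Set.Ioi (0:ℝ), g x * (x : ℂ) ^ s / (x : ℂ)

/-- The multiplicative convolution `(f ∗ g)(x) = ∫₀^∞ f(x/y) g(y) dy/y`. -/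
noncomputable def mulConv (f g : ℝ → ℂ) (x : ℝ) : ℂ :=
  ∫ y in Set.Ioi (0:ℝ), f (x / y) * g y / (y : ℂ)

/-- The strong Schwartz space `𝐒(ℝ₊ˣ)`: smooth functions on `(0,∞)` such that
`sup_{x>0} |x^m f⁽ⁿ⁾(x)| < ∞` for every `m : ℤ` and `n : ℕ`. -/
def IsStrongSchwartz (f : ℝ → ℂ) : Prop :=
  ContDiffOn ℝ (⊤ : ℕ∞) f (Set.Ioi 0) ∧
  ∀ (m : ℤ) (n : ℕ), ∃ C : ℝ,
    ∀ x ∈ Set.Ioi (0:ℝ), x ^ m * ‖iteratedDerivWithin n f (Set.Ioi 0) x‖ ≤ C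

/-- `L¹_loc,poly(ℝ₊ˣ)`: locally integrable functions on `(0,∞)` with `h(x) = O(x^a)`
as `x → ∞` and `h(x) = O(x^(-a))` as `x → 0⁺` for some `a ≥ 0`. -/
def IsLocPoly (h : ℝ → ℂ) : Prop :=
  MeasureTheory.LocallyIntegrableOn h (Set.Ioi 0) ∧
  ∃ a : ℝ, 0 ≤ a ∧
    h =O[Filter.atTop] (fun x : ℝ => x ^ a) ∧
    h =O[nhdsWithin 0 (Set.Ioi 0)] (fun x : ℝ => x ^ (-a))

/-- `h⁺(x) = h(x)` for `x < 1`, `0` otherwise. -/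
noncomputable def hPlus (h : ℝ → ℂ) (x : ℝ) : ℂ := if x < 1 then h x else 0

/-- `h⁻(x) = h(x)` for `x ≥ 1`, `0` otherwise. -/
noncomputable def hMinus (h : ℝ → ℂ) (x : ℝ) : ℂ := if 1 ≤ x then h x else 0

/-- Two-sided rpow bounds for a strong Schwartz function. -/
lemma schwartz_bound (f : ℝ → ℂ) (hf : IsStrongSchwartz f) (n : ℕ) :
    ∃ C : ℝ, 0 ≤ C ∧ ∀ t : ℝ, 0 < t →
      ‖f t‖ ≤ C * t ^ (-(n:ℝ)) ∧ ‖f t‖ ≤ C * t ^ (n:ℝ) := by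
  obtain ⟨C1, hC1⟩ := hf.2 (n:ℤ) 0
  obtain ⟨C2, hC2⟩ := hf.2 (-(n:ℤ)) 0
  refine ⟨max (max C1 C2) 0, le_max_right _ _, fun t ht => ?_⟩
  have h1 := hC1 t ht
  have h2 := hC2 t ht
  simp only [iteratedDerivWithin_zero] at h1 h2
  have htn : (0:ℝ) < t ^ (n:ℝ) := Real.rpow_pos_of_pos ht _
  have hzp : t ^ ((n:ℤ)) = t ^ (n:ℝ) := by
    rw [zpow_natCast, ← Real.rpow_natCast]
  have hzm : t ^ (-(n:ℤ)) = t ^ (-(n:ℝ)) := by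
    rw [zpow_neg, zpow_natCast, ← Real.rpow_natCast, ← Real.rpow_neg ht.le]
  constructor
  · rw [hzp] at h1
    have : ‖f t‖ ≤ C1 * t ^ (-(n:ℝ)) := by
      rw [Real.rpow_neg ht.le]
      rw [mul_comm] at h1
      exact (le_div_iff₀ htn).mpr h1 |>.trans_eq (div_eq_mul_inv _ _)
    exact this.trans (mul_le_mul_of_nonneg_right
      (le_max_of_le_left (le_max_left _ _)) (Real.rpow_nonneg ht.le _))
  · rw [hzm] at h2
    have htm : (0:ℝ) < t ^ (-(n:ℝ)) := Real.rpow_pos_of_pos ht _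
    have : ‖f t‖ ≤ C2 * t ^ ((n:ℝ)) := by
      rw [mul_comm] at h2
      have := (le_div_iff₀ htm).mpr h2
      rwa [div_eq_mul_inv, ← Real.rpow_neg ht.le, neg_neg] at this
    exact this.trans (mul_le_mul_of_nonneg_right
      (le_max_of_le_left (le_max_right _ _)) (Real.rpow_nonneg ht.le _))

set_option maxHeartbeats 1000000 in
lemma key_integrable (f h : ℝ → ℂ) (hf : IsStrongSchwartz f) (hh : IsLocPoly h)
    (x : ℝ) (hx : 0 < x) :
    MeasureTheory.IntegrableOn (fun y => f (x / y) * h y / (y:ℂ)) (Set.Ioi (0:ℝ)) := by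
  obtain ⟨hloc, a, ha, hOtop, hO0⟩ := hh
  set n : ℕ := ⌈a⌉₊ + 2 with hn_def
  have hna : a + 2 ≤ (n:ℝ) := by
    have := Nat.le_ceil a
    have : a ≤ (⌈a⌉₊ : ℝ) := this
    push_cast [hn_def]
    linarith
  obtain ⟨C, hCnn, hCb⟩ := schwartz_bound f hf n
  -- bound at infinity
  obtain ⟨Ct, hCt⟩ := (Asymptotics.isBigO_iff.mp hOtop)
  rw [Filter.eventually_atTop] at hCt
  obtain ⟨Y0, hY0⟩ := hCt
  set Y : ℝ := max Y0 1 with hY_def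
  have hY1 : (1:ℝ) ≤ Y := le_max_right _ _
  have hY0pos : (0:ℝ) < Y := lt_of_lt_of_le one_pos hY1
  -- bound at zero
  obtain ⟨C0, hC0'⟩ := (Asymptotics.isBigO_iff.mp hO0)
  rw [eventually_nhdsWithin_iff, Metric.eventually_nhds_iff] at hC0'
  obtain ⟨ε, hε, hεb⟩ := hC0'
  set e : ℝ := min ε 1 / 2 with he_def
  have he : 0 < e := by positivity
  have he1 : e ≤ 1 := by
    have : min ε 1 ≤ 1 := min_le_right _ _
    simp only [he_def]; linarith
  have heε : e < ε := by
    have : min ε 1 ≤ ε := min_le_left _ _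
    have h2 : 0 < min ε 1 := lt_min hε one_pos
    simp only [he_def]; linarith
  -- measurability
  have hfc : ContinuousOn f (Ioi 0) := hf.1.continuousOn
  have hcont : ContinuousOn (fun y : ℝ => f (x / y)) (Ioi 0) :=
    hfc.comp (continuousOn_const.div continuousOn_id fun y hy => ne_of_gt hy)
      fun y hy => div_pos hx hy
  have hhm : AEStronglyMeasurable h (volume.restrict (Ioi 0)) := hloc.aestronglyMeasurable
  have hGm : AEStronglyMeasurable (fun y => f (x / y) * h y / (y:ℂ))
      (volume.restrict (Ioi (0:ℝ))) := by
    have h1 : AEStronglyMeasurable (fun y : ℝ => f (x / y)) (volume.restrict (Ioi (0:ℝ))) :=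
      hcont.aestronglyMeasurable measurableSet_Ioi
    have h2 : AEStronglyMeasurable (fun y : ℝ => ((y:ℂ))⁻¹) (volume.restrict (Ioi (0:ℝ))) :=
      (Complex.measurable_ofReal.inv).aestronglyMeasurable
    simp only [div_eq_mul_inv]
    exact (h1.mul hhm).mul h2
  have hGnorm : ∀ y : ℝ, 0 < y → ‖f (x/y) * h y / (y:ℂ)‖ = ‖f (x/y)‖ * ‖h y‖ / y := by
    intro y hy
    rw [norm_div, norm_mul, Complex.norm_real, Real.norm_of_nonneg hy.le]
  -- piece 1 : near zero
  have hint1 : IntegrableOn (fun y => f (x / y) * h y / (y:ℂ)) (Ioc 0 e) := by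
    have hdom : IntegrableOn
        (fun y : ℝ => (C * x ^ (-(n:ℝ)) * C0) * y ^ ((n:ℝ) - a - 1)) (Ioc 0 e) := by
      have hii : IntervalIntegrable (fun y : ℝ => y ^ ((n:ℝ) - a - 1)) volume 0 e :=
        intervalIntegral.intervalIntegrable_rpow' (by linarith)
      rw [intervalIntegrable_iff_integrableOn_Ioc_of_le he.le] at hii
      exact hii.const_mul _
    refine Integrable.mono' hdom
      (hGm.mono_measure (Measure.restrict_mono Ioc_subset_Ioi_self le_rfl)) ?_
    refine (ae_restrict_iff' measurableSet_Ioc).mpr (.of_forall fun y hy => ?_)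
    obtain ⟨hy0, hye⟩ := hy
    rw [hGnorm y hy0]
    have hfb := (hCb (x / y) (div_pos hx hy0)).1
    have hhb : ‖h y‖ ≤ C0 * y ^ (-a) := by
      have hd : dist y 0 < ε := by
        rw [Real.dist_eq, sub_zero, abs_of_pos hy0]; linarith
      have := hεb hd (mem_Ioi.mpr hy0)
      rwa [Real.norm_of_nonneg (Real.rpow_nonneg hy0.le _)] at this
    have hsplit : (x / y) ^ (-(n:ℝ)) = x ^ (-(n:ℝ)) * y ^ ((n:ℝ)) := by
      rw [Real.div_rpow hx.le hy0.le, div_eq_mul_inv, Real.rpow_neg hy0.le, inv_inv]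
    have hy_pow : y ^ ((n:ℝ) - a - 1) = y ^ (n:ℝ) * y ^ (-a) / y := by
      rw [show (n:ℝ) - a - 1 = (n:ℝ) + (-a) + (-1) by ring, Real.rpow_add hy0,
        Real.rpow_add hy0, Real.rpow_neg_one]
      field_simp
    calc ‖f (x/y)‖ * ‖h y‖ / y
        ≤ (C * (x/y) ^ (-(n:ℝ))) * (C0 * y ^ (-a)) / y := by
          gcongr
      _ = (C * x ^ (-(n:ℝ)) * C0) * y ^ ((n:ℝ) - a - 1) := by
          rw [hsplit, hy_pow]; ring
  -- piece 3 : near infinity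
  have hint3 : IntegrableOn (fun y => f (x / y) * h y / (y:ℂ)) (Ioi Y) := by
    have hdom : IntegrableOn
        (fun y : ℝ => (C * x ^ ((n:ℝ)) * Ct) * y ^ (a - (n:ℝ) - 1)) (Ioi Y) := by
      exact (integrableOn_Ioi_rpow_of_lt (by linarith) hY0pos).const_mul _
    refine Integrable.mono' hdom
      (hGm.mono_measure (Measure.restrict_mono (Ioi_subset_Ioi hY0pos.le) le_rfl)) ?_
    refine (ae_restrict_iff' measurableSet_Ioi).mpr (.of_forall fun y hy => ?_)
    have hy0 : 0 < y := lt_trans hY0pos hy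
    rw [hGnorm y hy0]
    have hfb := (hCb (x / y) (div_pos hx hy0)).2
    have hhb : ‖h y‖ ≤ Ct * y ^ a := by
      have := hY0 y (le_trans (le_max_left _ _) (le_of_lt hy))
      rwa [Real.norm_of_nonneg (Real.rpow_nonneg hy0.le _)] at this
    have hsplit : (x / y) ^ ((n:ℝ)) = x ^ ((n:ℝ)) * y ^ (-(n:ℝ)) := by
      rw [Real.div_rpow hx.le hy0.le, div_eq_mul_inv, Real.rpow_neg hy0.le]
    have hy_pow : y ^ (a - (n:ℝ) - 1) = y ^ (-(n:ℝ)) * y ^ a / y := by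
      rw [show a - (n:ℝ) - 1 = (-(n:ℝ)) + a + (-1) by ring, Real.rpow_add hy0,
        Real.rpow_add hy0, Real.rpow_neg_one]
      field_simp
    calc ‖f (x/y)‖ * ‖h y‖ / y
        ≤ (C * (x/y) ^ ((n:ℝ))) * (Ct * y ^ a) / y := by
          gcongr
      _ = (C * x ^ ((n:ℝ)) * Ct) * y ^ (a - (n:ℝ) - 1) := by
          rw [hsplit, hy_pow]; ring
  -- piece 2 : middle
  have hsub : Icc e Y ⊆ Ioi 0 := fun y hy => lt_of_lt_of_le he hy.1
  have hh2 : IntegrableOn h (Icc e Y) := hloc.integrableOn_compact_subset hsub isCompact_Icc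
  have hint2 : IntegrableOn (fun y => f (x / y) * h y / (y:ℂ)) (Icc e Y) := by
    refine Integrable.mono' ((hh2.norm).const_mul (C * (x / e) ^ (n:ℝ) / e))
      (hGm.mono_measure (Measure.restrict_mono hsub le_rfl)) ?_
    refine (ae_restrict_iff' measurableSet_Icc).mpr (.of_forall fun y hy => ?_)
    have hy0 : 0 < y := lt_of_lt_of_le he hy.1
    rw [hGnorm y hy0]
    have hfb := (hCb (x / y) (div_pos hx hy0)).2
    have h1 : ‖f (x/y)‖ ≤ C * (x/e) ^ (n:ℝ) := by
      refine hfb.trans ?_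
      have hdd : x / y ≤ x / e := div_le_div_of_nonneg_left hx.le he hy.1
      exact mul_le_mul_of_nonneg_left
        (Real.rpow_le_rpow (div_pos hx hy0).le hdd (Nat.cast_nonneg n)) hCnn
    have h2 : ‖f (x/y)‖ * ‖h y‖ / y ≤ (C * (x/e) ^ (n:ℝ)) * ‖h y‖ / e :=
      div_le_div₀ (by positivity) (mul_le_mul h1 le_rfl (norm_nonneg _) (by positivity))
        he hy.1
    refine h2.trans_eq ?_
    ring
  -- assemble
  have htot : IntegrableOn (fun y => f (x / y) * h y / (y:ℂ))
      (Ioc 0 e ∪ (Icc e Y ∪ Ioi Y)) := hint1.union (hint2.union hint3)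
  refine htot.mono_set fun y hy => ?_
  rcases le_or_gt y e with h1 | h1
  · exact Or.inl ⟨hy, h1⟩
  rcases le_or_gt y Y with h2 | h2
  · exact Or.inr (Or.inl ⟨h1.le, h2⟩)
  · exact Or.inr (Or.inr h2)

/-- if `f ∗ h ≡ 0` then `M(f ∗ h⁺)(s) = −M(f ∗ h⁻)(s)` for every `s`. -/
theorem mellin_mulConv_plus_eq_neg_minus (f h : ℝ → ℂ)
    (hf : IsStrongSchwartz f) (hh : IsLocPoly h)
    (hconv : ∀ x : ℝ, 0 < x → mulConv f h x = 0) :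
    ∀ s : ℂ, mellinT (mulConv f (hPlus h)) s = - mellinT (mulConv f (hMinus h)) s := by
  have key : ∀ x ∈ Set.Ioi (0:ℝ), mulConv f (hPlus h) x = - mulConv f (hMinus h) x := by
    intro x hx
    have hG := key_integrable f h hf hh x hx
    have hp : (fun y => f (x / y) * hPlus h y / (y:ℂ)) =
        Set.indicator (Iio (1:ℝ)) (fun y => f (x / y) * h y / (y:ℂ)) := by
      funext y
      by_cases hy : y < 1 <;> simp [hPlus, Set.indicator, hy]
    have hm : (fun y => f (x / y) * hMinus h y / (y:ℂ)) =
        Set.indicator (Ici (1:ℝ)) (fun y => f (x / y) * h y / (y:ℂ)) := by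
      funext y
      by_cases hy : (1:ℝ) ≤ y <;> simp [hMinus, Set.indicator, hy]
    have hip : Integrable (Set.indicator (Iio (1:ℝ)) (fun y => f (x / y) * h y / (y:ℂ)))
        (volume.restrict (Ioi (0:ℝ))) := hG.indicator measurableSet_Iio
    have him : Integrable (Set.indicator (Ici (1:ℝ)) (fun y => f (x / y) * h y / (y:ℂ)))
        (volume.restrict (Ioi (0:ℝ))) := hG.indicator measurableSet_Ici
    have hsum : mulConv f (hPlus h) x + mulConv f (hMinus h) x = mulConv f h x := by
      rw [mulConv, mulConv, mulConv, hp, hm, ← MeasureTheory.integral_add hip him]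
      congr 1
      funext y
      have hcompl : (Ici (1:ℝ)) = (Iio 1)ᶜ := compl_Iio.symm
      rw [hcompl]
      exact congrFun (Set.indicator_self_add_compl (Iio (1:ℝ)) _) y
    rw [hconv x hx] at hsum
    exact eq_neg_of_add_eq_zero_left hsum
  intro s
  unfold mellinT
  rw [← MeasureTheory.integral_neg]
  refine MeasureTheory.setIntegral_congr_fun measurableSet_Ioi fun x hx => ?_
  rw [key x hx]
  ring
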